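/- Let (G, E(∂₀), ∂, ▷) be the free crossed module on a map ∂₀ : K → G. Let (G', E', ∂', ▷') be a crossed module, φ : G → G' a group homomorphism, and ψ₀ : K → E' a map such that ∂'(ψ₀(m)) = φ(∂₀(m)) for all m ∈ K. Then there exists a unique group homomorphism ψ : E(∂₀) → E' with ψ⟦1,m⟧ = ψ₀(m) for all m ∈ K such that (φ, ψ) is a morphism of crossed modules, i.e. ∂' ∘ ψ = φ ∘ ∂ and ψ(X ▷ e) = φ(X) ▷' ψ(e) for all X ∈ G, e ∈ E(∂₀). -/

import Mathlib

/-- The defining relations of the principal group of the free crossed module on a map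
`d0 : K → G`. -/
def crossedRels {G K : Type*} [Group G] (d0 : K → G) : Set (FreeGroup (G × K)) :=
  {r | ∃ (X Y : G) (m n : K),
    r = FreeGroup.of (X, m) * FreeGroup.of (Y, n) * (FreeGroup.of (X, m))⁻¹ *
        (FreeGroup.of (X * d0 m * X⁻¹ * Y, n))⁻¹}

/-- The principal group `E(d0)` of the free crossed module on `d0 : K → G`. -/
abbrev FreeCMGroup {G K : Type*} [Group G] (d0 : K → G) : Type _ :=
  PresentedGroup (crossedRels d0)

/-- The class `⟦X, m⟧` of the generator `(X, m)` in `E(d0)`. -/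
def cmGen {G K : Type*} [Group G] (d0 : K → G) (X : G) (m : K) : FreeCMGroup d0 :=
  PresentedGroup.of (X, m)

/-!
The group `E(d0)` is presented on the symbols `⟦X, m⟧`, so a morphism out of it is determined by
the images of the generators. Equivariance together with `⟦X, m⟧ = X ▷ ⟦1, m⟧` forces
`ψ ⟦X, m⟧ = φ X ▷' ψ0 m`, which gives uniqueness. Conversely these images satisfy the defining
relations: by the Peiffer identity and (CM1) for `E'`, conjugation by `φ X ▷' ψ0 m` is the action
of `φ (X * d0 m * X⁻¹)`, which is exactly the relation of `E(d0)`.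
-/

theorem conj_apply_eq_apply_conj {G' E' : Type*} [Group G'] [Group E']
    (δ' : E' →* G') (ρ' : G' →* MulAut E')
    (hCM1 : ∀ (x : G') (e : E'), δ' (ρ' x e) = x * δ' e * x⁻¹)
    (hCM2 : ∀ e f : E', ρ' (δ' e) f = e * f * e⁻¹) (x : G') (e f : E') :
    ρ' x e * f * (ρ' x e)⁻¹ = ρ' (x * δ' e * x⁻¹) f := by
  rw [← hCM2, hCM1]

namespace FreeCMGroup

variable {G K E' : Type*} [Group G] [Group E'] {d0 : K → G}

theorem cmGen_eq_apply_cmGen_one (ρ : G →* MulAut (FreeCMGroup d0))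
    (hρ : ∀ (X Y : G) (m : K), ρ X (cmGen d0 Y m) = cmGen d0 (X * Y) m) (X : G) (m : K) :
    cmGen d0 X m = ρ X (cmGen d0 1 m) := by
  rw [hρ, mul_one]

theorem hom_ext {ψ χ : FreeCMGroup d0 →* E'}
    (h : ∀ (X : G) (m : K), ψ (cmGen d0 X m) = χ (cmGen d0 X m)) : ψ = χ :=
  PresentedGroup.ext fun p => h p.1 p.2

theorem hom_ext_of_map_apply (ρ : G →* MulAut (FreeCMGroup d0))
    (hρ : ∀ (X Y : G) (m : K), ρ X (cmGen d0 Y m) = cmGen d0 (X * Y) m)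
    (σ : G →* MulAut E') {ψ χ : FreeCMGroup d0 →* E'}
    (hψ : ∀ (X : G) (e : FreeCMGroup d0), ψ (ρ X e) = σ X (ψ e))
    (hχ : ∀ (X : G) (e : FreeCMGroup d0), χ (ρ X e) = σ X (χ e))
    (h : ∀ m : K, ψ (cmGen d0 1 m) = χ (cmGen d0 1 m)) : ψ = χ :=
  hom_ext fun X m => by rw [cmGen_eq_apply_cmGen_one ρ hρ, hψ, hχ, h]

section lift

variable {G' : Type*} [Group G'] (δ' : E' →* G') (ρ' : G' →* MulAut E')
  (hCM1 : ∀ (x : G') (e : E'), δ' (ρ' x e) = x * δ' e * x⁻¹)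
  (hCM2 : ∀ e f : E', ρ' (δ' e) f = e * f * e⁻¹)
  (φ : G →* G') (ψ0 : K → E') (hψ0 : ∀ m : K, δ' (ψ0 m) = φ (d0 m))

include hCM1 hCM2 hψ0 in
theorem lift_rel_eq_one :
    ∀ r ∈ crossedRels d0, FreeGroup.lift (fun p : G × K => ρ' (φ p.1) (ψ0 p.2)) r = 1 := by
  rintro r ⟨X, Y, m, n, rfl⟩
  rw [map_mul, map_inv, mul_inv_eq_one, map_mul, map_mul, map_inv]
  simp only [FreeGroup.lift_apply_of]
  have hφ : φ X * φ (d0 m) * (φ X)⁻¹ * φ Y = φ (X * d0 m * X⁻¹ * Y) := by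
    simp only [map_mul, map_inv]
  rw [conj_apply_eq_apply_conj δ' ρ' hCM1 hCM2, hψ0, ← MulAut.mul_apply, ← map_mul ρ', hφ]

def lift : FreeCMGroup d0 →* E' :=
  PresentedGroup.toGroup (lift_rel_eq_one δ' ρ' hCM1 hCM2 φ ψ0 hψ0)

theorem lift_cmGen (X : G) (m : K) :
    lift δ' ρ' hCM1 hCM2 φ ψ0 hψ0 (cmGen d0 X m) = ρ' (φ X) (ψ0 m) :=
  PresentedGroup.toGroup.of _

theorem lift_cmGen_one (m : K) : lift δ' ρ' hCM1 hCM2 φ ψ0 hψ0 (cmGen d0 1 m) = ψ0 m := by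
  rw [lift_cmGen, map_one, map_one, MulAut.one_apply]

theorem comp_lift (δ : FreeCMGroup d0 →* G)
    (hδ : ∀ (X : G) (m : K), δ (cmGen d0 X m) = X * d0 m * X⁻¹) :
    δ'.comp (lift δ' ρ' hCM1 hCM2 φ ψ0 hψ0) = φ.comp δ :=
  hom_ext fun X m => by
    simp only [MonoidHom.comp_apply, lift_cmGen, hδ, hCM1, hψ0, map_mul, map_inv]

theorem lift_apply (ρ : G →* MulAut (FreeCMGroup d0))
    (hρ : ∀ (X Y : G) (m : K), ρ X (cmGen d0 Y m) = cmGen d0 (X * Y) m)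
    (X : G) (e : FreeCMGroup d0) :
    lift δ' ρ' hCM1 hCM2 φ ψ0 hψ0 (ρ X e) = ρ' (φ X) (lift δ' ρ' hCM1 hCM2 φ ψ0 hψ0 e) := by
  have hcomp : (lift δ' ρ' hCM1 hCM2 φ ψ0 hψ0).comp (ρ X).toMonoidHom
      = (ρ' (φ X)).toMonoidHom.comp (lift δ' ρ' hCM1 hCM2 φ ψ0 hψ0) :=
    hom_ext fun Y m => by
      simp only [MonoidHom.comp_apply, MulEquiv.coe_toMonoidHom, hρ, lift_cmGen, map_mul,
        MulAut.mul_apply]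
  exact DFunLike.congr_fun hcomp e

end lift

end FreeCMGroup

/-- universal property of the free crossed module.  Let `(G, E(d0), δ, ρ)`
be the free crossed module on `d0 : K → G` (so `δ ⟦X,m⟧ = X * d0 m * X⁻¹` and
`ρ X ⟦Y,m⟧ = ⟦X*Y,m⟧`).  Let `(G', E', δ', ρ')` be a crossed module, `φ : G →* G'` a group
homomorphism and `ψ0 : K → E'` a map with `δ' (ψ0 m) = φ (d0 m)` for all `m`.  Then there is
a unique group homomorphism `ψ : E(d0) →* E'` with `ψ ⟦1,m⟧ = ψ0 m` such that `(φ, ψ)` is a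
morphism of crossed modules, i.e. `δ' ∘ ψ = φ ∘ δ` and `ψ (ρ X e) = ρ' (φ X) (ψ e)`. -/
theorem freeCrossedModule_universalProperty {G K G' E' : Type*}
    [Group G] [Group G'] [Group E'] (d0 : K → G)
    (δ : FreeCMGroup d0 →* G) (ρ : G →* MulAut (FreeCMGroup d0))
    (hδ : ∀ (X : G) (m : K), δ (cmGen d0 X m) = X * d0 m * X⁻¹)
    (hρ : ∀ (X Y : G) (m : K), ρ X (cmGen d0 Y m) = cmGen d0 (X * Y) m)
    (δ' : E' →* G') (ρ' : G' →* MulAut E')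
    (hCM1' : ∀ (x : G') (e : E'), δ' (ρ' x e) = x * δ' e * x⁻¹)
    (hCM2' : ∀ e f : E', ρ' (δ' e) f = e * f * e⁻¹)
    (φ : G →* G') (ψ0 : K → E')
    (hψ0 : ∀ m : K, δ' (ψ0 m) = φ (d0 m)) :
    ∃! ψ : FreeCMGroup d0 →* E',
      (∀ m : K, ψ (cmGen d0 1 m) = ψ0 m) ∧
      δ'.comp ψ = φ.comp δ ∧
      (∀ (X : G) (e : FreeCMGroup d0), ψ (ρ X e) = ρ' (φ X) (ψ e)) := by
  have hL_one := FreeCMGroup.lift_cmGen_one δ' ρ' hCM1' hCM2' φ ψ0 hψ0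
  have hL_apply := FreeCMGroup.lift_apply δ' ρ' hCM1' hCM2' φ ψ0 hψ0 ρ hρ
  refine ⟨_, ⟨hL_one, FreeCMGroup.comp_lift δ' ρ' hCM1' hCM2' φ ψ0 hψ0 δ hδ, hL_apply⟩, ?_⟩
  rintro ψ ⟨hψ_one, -, hψ_apply⟩
  exact FreeCMGroup.hom_ext_of_map_apply ρ hρ (ρ'.comp φ) hψ_apply hL_apply
    fun m => (hψ_one m).trans (hL_one m).symm
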